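/- arXiv:2411.14227 — 2 statements merged into one kernel-verified Lean document; each statement's English description precedes it below -/
import Mathlib

section
/- Let $I \subset R = K[x_1,\ldots,x_n]$ be a square-free monomial ideal and suppose $\mathfrak{p} \in \mathrm{Ass}(R/I^s) \setminus \mathrm{Min}(I)$ for some $s > 1$, and let $x_i \in \mathfrak{p}$. Then there exists $\mathfrak{q} \in \mathrm{Min}(I)$ with $x_i \in \mathfrak{q}$ and $\mathfrak{q} \subsetneq \mathfrak{p}$. -/
open MvPolynomial

/-- A square-free monomial ideal: generated by square-free monomials. -/
def IsSqFreeMonomialIdeal {n : ℕ} {K : Type*} [Field K]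
    (I : Ideal (MvPolynomial (Fin n) K)) : Prop :=
  ∃ S : Set (Fin n →₀ ℕ), (∀ d ∈ S, ∀ i, d i ≤ 1) ∧
    I = Ideal.span ((fun d => (monomial d (1 : K) : MvPolynomial (Fin n) K)) '' S)

/-!
Write `I = (x^d : d ∈ S)` and `p = (I^s : f)`, and let `u` be the product of the variables not
in `p`. If no minimal prime of `I` strictly inside `p` contains `x_i`, then for every generator
`x^d` the monomial `u * x^d / x_i^(d_i)` is again a multiple of a generator. Otherwise `I` lies in
the prime generated by the variables `x_j ∈ p` with `j = i` or `d_j = 0`; a minimal prime of `I`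
inside it lies strictly inside `p`, as `p` is not minimal, and contains `x^d`, hence one of its
variables, which can only be `x_i`. Applied to each factor of a generator of `I^s`, this gives
`u^s * (I^s : x_i) ⊆ I^s`. So `x_i f ∈ I^s` forces `u^s f ∈ I^s`, i.e. `u^s ∈ p`, though no
variable dividing `u` lies in `p`.
-/

theorem Ideal.exists_mem_iff_mul_mem_of_mem_associatedPrimes {R : Type*} [CommRing R]
    [IsNoetherianRing R] {J p : Ideal R} (hp : p ∈ associatedPrimes R (R ⧸ J)) :
    p.IsPrime ∧ ∃ f : R, ∀ r, r ∈ p ↔ r * f ∈ J := by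
  obtain ⟨hprime, x, rfl⟩ := isAssociatedPrime_iff.mp hp
  obtain ⟨f, rfl⟩ := Ideal.Quotient.mk_surjective x
  refine ⟨hprime, f, fun r => ?_⟩
  rw [Submodule.mem_colon_singleton, Submodule.mem_bot, Algebra.smul_def,
    Ideal.Quotient.algebraMap_eq, ← map_mul, Ideal.Quotient.eq_zero_iff_mem]

namespace MvPolynomial

open Pointwise

variable {σ R : Type*} [CommRing R]

theorem span_X_image_eq_ker (W : Set σ) :
    Ideal.span (X '' W : Set (MvPolynomial σ R)) =
      RingHom.ker (aeval (Wᶜ.indicator X : σ → MvPolynomial σ R)) := by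
  set P := Ideal.span (X '' W : Set (MvPolynomial σ R))
  have hkill :
      (Ideal.Quotient.mkₐ R P).comp (aeval (Wᶜ.indicator X)) = Ideal.Quotient.mkₐ R P := by
    refine algHom_ext fun j => ?_
    by_cases hj : j ∈ W
    · have hXj : X j ∈ P := Ideal.subset_span ⟨j, hj, rfl⟩
      simpa [hj] using (Ideal.Quotient.eq_zero_iff_mem.mpr hXj).symm
    · simp [hj]
  refine le_antisymm (Ideal.span_le.mpr ?_) fun f hf => ?_
  · rintro - ⟨j, hj, rfl⟩
    simp [hj]
  · rw [← Ideal.Quotient.eq_zero_iff_mem, ← Ideal.Quotient.mkₐ_eq_mk R, ← hkill,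
      AlgHom.comp_apply, RingHom.mem_ker.mp hf, map_zero]

theorem isPrime_span_X_image [IsDomain R] (W : Set σ) :
    (Ideal.span (X '' W : Set (MvPolynomial σ R))).IsPrime := by
  rw [span_X_image_eq_ker]
  exact RingHom.ker_isPrime _

theorem monomial_mem_span_X_image_iff [Nontrivial R] {W : Set σ} {d : σ →₀ ℕ} :
    monomial d (1 : R) ∈ Ideal.span (X '' W) ↔ ∃ j ∈ W, d j ≠ 0 := by
  classical
  rw [mem_ideal_span_X_image, support_monomial, if_neg one_ne_zero]
  simp

theorem X_mem_span_X_image_iff [Nontrivial R] {W : Set σ} {j : σ} :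
    (X j : MvPolynomial σ R) ∈ Ideal.span (X '' W) ↔ j ∈ W := by
  rw [X, monomial_mem_span_X_image_iff]
  simp [Finsupp.single_apply_ne_zero]

theorem exists_X_mem_of_monomial_mem {q : Ideal (MvPolynomial σ R)} (hq : q.IsPrime)
    {d : σ →₀ ℕ} (hd : monomial d (1 : R) ∈ q) : ∃ j, d j ≠ 0 ∧ X j ∈ q := by
  rw [monomial_eq, C_1, one_mul, Finsupp.prod] at hd
  obtain ⟨j, hj, hXj⟩ := hq.prod_mem_iff.mp hd
  exact ⟨j, Finsupp.mem_support_iff.mp hj, hq.mem_of_pow_mem _ hXj⟩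

def sumsetPow (S : Set (σ →₀ ℕ)) : ℕ → Set (σ →₀ ℕ)
  | 0 => {0}
  | k + 1 => S + sumsetPow S k

theorem span_monomial_image_pow (S : Set (σ →₀ ℕ)) (k : ℕ) :
    Ideal.span ((fun d => monomial d (1 : R)) '' S) ^ k
      = Ideal.span ((fun d => monomial d (1 : R)) '' sumsetPow S k) := by
  induction k with
  | zero => simp [sumsetPow]
  | succ k ih =>
    rw [pow_succ', ih, Ideal.span_mul_span', sumsetPow, ← Set.image2_mul, ← Set.image2_add,
      Set.image2_image_left, Set.image2_image_right, Set.image_image2]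
    simp only [monomial_mul, one_mul]

theorem exists_mem_sumsetPow_le_erase_add {S : Set (σ →₀ ℕ)} {i : σ} {g : σ →₀ ℕ}
    (hS : ∀ d ∈ S, ∃ d' ∈ S, d' ≤ d.erase i + g) (k : ℕ) :
    ∀ e ∈ sumsetPow S k, ∃ e' ∈ sumsetPow S k, e' ≤ e.erase i + k • g := by
  induction k with
  | zero =>
    rintro e rfl
    exact ⟨0, rfl, zero_le⟩
  | succ k ih =>
    rintro - ⟨a, ha, b, hb, rfl⟩
    obtain ⟨a', ha', hle⟩ := hS a ha
    obtain ⟨b', hb', hle'⟩ := ih b hb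
    refine ⟨a' + b', Set.add_mem_add ha' hb', ?_⟩
    calc a' + b' ≤ (a.erase i + g) + (b.erase i + k • g) := add_le_add hle hle'
      _ = (a + b).erase i + (k + 1) • g := by rw [Finsupp.erase_add, succ_nsmul]; abel

theorem monomial_mul_mem_of_X_mul_mem {A : Set (σ →₀ ℕ)} {i : σ} {g : σ →₀ ℕ}
    (hA : ∀ d ∈ A, ∃ d' ∈ A, d' ≤ d.erase i + g) {f : MvPolynomial σ R}
    (hf : X i * f ∈ Ideal.span ((fun d => monomial d (1 : R)) '' A)) :
    monomial g 1 * f ∈ Ideal.span ((fun d => monomial d (1 : R)) '' A) := by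
  rw [mem_ideal_span_monomial_image] at hf ⊢
  intro μ hμ
  rw [mem_support_iff, coeff_monomial_mul', one_mul] at hμ
  obtain ⟨ν, rfl⟩ := exists_add_of_le (of_not_not fun h => hμ (if_neg h))
  rw [if_pos le_self_add, add_tsub_cancel_left] at hμ
  obtain ⟨d, hd, hdle⟩ := hf (Finsupp.single i 1 + ν) (by rwa [mem_support_iff, coeff_X_mul])
  obtain ⟨d', hd', hd'le⟩ := hA d hd
  have herase : d.erase i ≤ ν := Finsupp.le_def.mpr fun j => by
    by_cases hj : j = i
    · simp [hj]
    · simpa [Finsupp.erase_ne hj, Finsupp.single_apply, Ne.symm hj]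
        using Finsupp.le_def.mp hdle j
  exact ⟨d', hd', hd'le.trans (by rw [add_comm g]; exact add_le_add_left herase g)⟩

theorem exists_le_erase_add_of_forall_minimalPrimes [IsDomain R] {S : Set (σ →₀ ℕ)}
    (hS : ∀ d ∈ S, ∀ j, d j ≤ 1) {U : Finset σ} {i : σ}
    (hmin : ∀ q ∈ (Ideal.span ((fun d => monomial d (1 : R)) '' S)).minimalPrimes,
      q ≤ Ideal.span (X '' (↑U)ᶜ) → X i ∉ q)
    {d : σ →₀ ℕ} (hd : d ∈ S) :
    ∃ d' ∈ S, d' ≤ d.erase i + ∑ j ∈ U, Finsupp.single j 1 := by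
  classical
  by_contra! hnot
  set W : Set σ := {j | j ∉ U ∧ (j = i ∨ d j = 0)}
  have hIW : Ideal.span ((fun d => monomial d (1 : R)) '' S) ≤ Ideal.span (X '' W) := by
    rw [Ideal.span_le]
    rintro - ⟨d', hd', rfl⟩
    obtain ⟨j, hj⟩ :
        ∃ j, (d.erase i + ∑ j ∈ U, Finsupp.single j 1 : σ →₀ ℕ) j < d' j := by
      simpa [Finsupp.le_def] using hnot d' hd'
    have hd'j := hS d' hd' j
    simp only [Finsupp.add_apply, Finsupp.finsetSum_apply, Finsupp.single_apply,
      Finset.sum_ite_eq'] at hj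
    refine monomial_mem_span_X_image_iff.mpr ⟨j, ⟨fun hjU => ?_, ?_⟩, by omega⟩
    · rw [if_pos hjU] at hj
      omega
    · by_cases hji : j = i
      · exact Or.inl hji
      · rw [Finsupp.erase_ne hji] at hj
        split_ifs at hj <;> omega
  have := isPrime_span_X_image (R := R) W
  obtain ⟨q, hq, hqW⟩ := Ideal.exists_minimalPrimes_le hIW
  obtain ⟨j, hdj, hXj⟩ :=
    exists_X_mem_of_monomial_mem hq.1.1 (hq.1.2 (Ideal.subset_span ⟨d, hd, rfl⟩))
  have hji : j = i := (X_mem_span_X_image_iff.mp (hqW hXj)).2.resolve_right hdj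
  exact hmin q hq (hqW.trans (Ideal.span_mono (Set.image_mono fun k hk => hk.1))) (hji ▸ hXj)

end MvPolynomial

theorem stmt14_general {n : ℕ} {K : Type*} [Field K]
    (I : Ideal (MvPolynomial (Fin n) K)) (hI : IsSqFreeMonomialIdeal I)
    (s : ℕ)
    (p : Ideal (MvPolynomial (Fin n) K))
    (hAss : p ∈ associatedPrimes (MvPolynomial (Fin n) K)
      (MvPolynomial (Fin n) K ⧸ (I ^ s)))
    (hpmin : p ∉ I.minimalPrimes)
    (i : Fin n) (hi : (X i : MvPolynomial (Fin n) K) ∈ p) :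
    ∃ q ∈ I.minimalPrimes, (X i : MvPolynomial (Fin n) K) ∈ q ∧ q < p := by
  classical
  obtain ⟨S, hS, hIS⟩ := hI
  obtain ⟨hp, f, hf⟩ := Ideal.exists_mem_iff_mul_mem_of_mem_associatedPrimes hAss
  by_contra! hG
  set U := Finset.univ.filter fun j => (X j : MvPolynomial (Fin n) K) ∉ p
  have hUp : Ideal.span (X '' (↑U)ᶜ) ≤ p := Ideal.span_le.mpr <| by
    rintro - ⟨j, hj, rfl⟩
    simpa [U] using hj
  have hmin : ∀ q ∈ I.minimalPrimes, q ≤ Ideal.span (X '' (↑U)ᶜ) → X i ∉ q :=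
    fun q hq hle hXi => hG q hq hXi (lt_of_le_of_ne (hle.trans hUp) fun h => hpmin (h ▸ hq))
  have hfs : monomial (s • ∑ j ∈ U, Finsupp.single j 1) 1 * f ∈ I ^ s := by
    subst hIS
    rw [span_monomial_image_pow] at hf ⊢
    exact monomial_mul_mem_of_X_mul_mem
      (exists_mem_sumsetPow_le_erase_add
        (fun d hd => exists_le_erase_add_of_forall_minimalPrimes hS hmin hd) s) ((hf _).mp hi)
  have hUprod : (∏ j ∈ U, monomial (Finsupp.single j 1) (1 : K)) ^ s ∈ p := by
    rwa [← monomial_sum_one, monomial_pow, one_pow, hf]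
  obtain ⟨j, hjU, hXj⟩ := hp.prod_mem_iff.mp (hp.mem_of_pow_mem s hUprod)
  exact (Finset.mem_filter.mp hjU).2 hXj

/-- If `𝔭 ∈ Ass(R/I^s) \ Min(I)` for some `s > 1` and `x_i ∈ 𝔭`, then
there is `𝔮 ∈ Min(I)` with `x_i ∈ 𝔮` and `𝔮 ⊊ 𝔭`. -/
theorem stmt14 {n : ℕ} {K : Type*} [Field K]
    (I : Ideal (MvPolynomial (Fin n) K)) (hI : IsSqFreeMonomialIdeal I)
    (s : ℕ) (hs : 1 < s)
    (p : Ideal (MvPolynomial (Fin n) K))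
    (hAss : p ∈ associatedPrimes (MvPolynomial (Fin n) K)
      (MvPolynomial (Fin n) K ⧸ (I ^ s)))
    (hpmin : p ∉ I.minimalPrimes)
    (i : Fin n) (hi : (X i : MvPolynomial (Fin n) K) ∈ p) :
    ∃ q ∈ I.minimalPrimes, (X i : MvPolynomial (Fin n) K) ∈ q ∧ q < p :=
  stmt14_general I hI s p hAss hpmin i hi
end

section
/- Let $I \subset R = K[x_1,\ldots,x_n]$ be a square-free monomial ideal and $\mathfrak{p} \in \mathrm{Ass}(R/I^s) \setminus \mathrm{Min}(I)$ for some $s > 1$ with $x_i \in \mathfrak{p}$. Then $\mathfrak{p} \setminus x_i \notin \mathrm{Min}(I \setminus x_i)$, where $\setminus x_i$ denotes setting $x_i = 0$ in every minimal generator. -/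
open MvPolynomial

/-- The deletion map setting `x_i = 0` (and fixing the other variables). -/
noncomputable def delMap {n : ℕ} (K : Type*) [Field K] (i : Fin n) :
    MvPolynomial (Fin n) K →ₐ[K] MvPolynomial (Fin n) K :=
  MvPolynomial.aeval (fun j => if j = i then 0 else X j)

/-!
Suppose `𝔭 \ xᵢ` were minimal over `I \ xᵢ`. A minimal prime `P` of `I` is generated by variables;
if `xᵢ ∈ P ⊆ 𝔭`, then `P \ xᵢ` is a prime between `I \ xᵢ` and `𝔭 \ xᵢ`, so
`𝔭 = (𝔭 \ xᵢ) + (xᵢ) = (P \ xᵢ) + (xᵢ) = P` would be minimal. Hence no minimal prime inside `𝔭`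
contains `xᵢ`, and this contradicts `xᵢ ∈ 𝔭 = (I^s : f)`: let `J` be generated by the `xᵢ`-free
monomials lying in every minimal prime inside `𝔭`, and `u` the product of the variables outside
`𝔭`. Erasing `xᵢ` from the generators of `I` gives `I ⊆ J`; `u` lies in the other minimal primes,
so `J u ⊆ √I`, hence `J u ⊆ I` because a monomial in the radical of a square-free monomial ideal
lies in the ideal. As `J^s` is generated by `xᵢ`-free monomials, `xᵢ f ∈ I^s ⊆ J^s` forces
`f ∈ J^s`, so `u^s f ∈ (J u)^s ⊆ I^s`, i.e. `u^s ∈ 𝔭`, which no factor of `u` allows.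
-/

theorem Ideal.colon_bot_singleton_mk {A : Type*} [CommRing A] (J : Ideal A) (f : A) :
    (⊥ : Submodule A (A ⧸ J)).colon {Ideal.Quotient.mk J f} = J.colon {f} := by
  ext r
  simp [Submodule.mem_colon_singleton, Algebra.smul_def, ← map_mul,
    Ideal.Quotient.eq_zero_iff_mem]

namespace MvPolynomial

variable {σ R : Type*}

section CommSemiring

variable [CommSemiring R]

variable (R) in
noncomputable abbrev monomialIdeal (S : Set (σ →₀ ℕ)) : Ideal (MvPolynomial σ R) :=
  Ideal.span ((fun d => monomial d 1) '' S)

variable (R) in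
noncomputable abbrev varIdeal (V : Set σ) : Ideal (MvPolynomial σ R) :=
  Ideal.span (X '' V)

theorem X_pow_mul_monomial_erase (i : σ) (d : σ →₀ ℕ) :
    X i ^ d i * monomial (d.erase i) (1 : R) = monomial d 1 := by
  rw [X_pow_eq_monomial, monomial_mul, one_mul, Finsupp.single_add_erase]

variable (R) in
def monomialsWithoutX (i : σ) : Submonoid (MvPolynomial σ R) where
  carrier := (fun d => monomial d 1) '' {d | d i = 0}
  mul_mem' := by
    rintro _ _ ⟨a, ha, rfl⟩ ⟨b, hb, rfl⟩
    exact ⟨a + b, by simp_all, by simp [monomial_mul]⟩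
  one_mem' := ⟨0, rfl, rfl⟩

theorem mem_of_X_mul_mem_span {i : σ} {G : Set (MvPolynomial σ R)}
    (hG : G ⊆ monomialsWithoutX R i) {f : MvPolynomial σ R} (h : X i * f ∈ Ideal.span G) :
    f ∈ Ideal.span G := by
  classical
  obtain ⟨T, hT, rfl⟩ := Set.subset_image_iff.1 hG
  rw [mem_ideal_span_monomial_image] at h ⊢
  intro d hd
  obtain ⟨e, he, hle⟩ :=
    h (Finsupp.single i 1 + d) (by simpa only [mem_support_iff, coeff_X_mul] using hd)
  refine ⟨e, he, fun j => ?_⟩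
  by_cases hj : j = i
  · subst hj
    simp [show e j = 0 from hT he]
  · simpa [Finsupp.single_apply, Ne.symm hj] using hle j

theorem mem_of_X_mul_mem_monomialIdeal_pow {i : σ} {T : Set (σ →₀ ℕ)} (hT : ∀ d ∈ T, d i = 0)
    {s : ℕ} {f : MvPolynomial σ R} (h : X i * f ∈ monomialIdeal R T ^ s) :
    f ∈ monomialIdeal R T ^ s := by
  rw [monomialIdeal, Ideal.span, Submodule.span_pow] at h ⊢
  exact mem_of_X_mul_mem_span
    (Submonoid.pow_subset (by rintro _ ⟨d, hd, rfl⟩; exact ⟨d, hT d hd, rfl⟩)) h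

theorem monomial_mem_of_mem_radical [Nontrivial R] {S : Set (σ →₀ ℕ)}
    (hS : ∀ e ∈ S, ∀ j, e j ≤ 1) {d : σ →₀ ℕ}
    (h : monomial d 1 ∈ (monomialIdeal R S).radical) : monomial d 1 ∈ monomialIdeal R S := by
  classical
  obtain ⟨m, hm⟩ := h
  rw [monomial_pow, one_pow, monomialIdeal, mem_ideal_span_monomial_image] at hm
  obtain ⟨e, he, hle⟩ := hm _ (by
    rw [support_monomial, if_neg one_ne_zero]; exact Finset.mem_singleton_self _)
  rw [monomialIdeal, mem_ideal_span_monomial_image]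
  intro x hx
  rw [support_monomial, if_neg one_ne_zero, Finset.mem_singleton] at hx
  subst hx
  refine ⟨e, he, fun j => ?_⟩
  have hej := hS e he j
  have hmj := hle j
  simp only [Finsupp.smul_apply, smul_eq_mul] at hmj
  rcases Nat.eq_zero_or_pos (x j) with h0 | h0
  · rw [h0, mul_zero] at hmj
    omega
  · omega

theorem monomialIdeal_le_of_X_notMem {S : Set (σ →₀ ℕ)} {𝔓 : Set (Ideal (MvPolynomial σ R))}
    {i : σ} (h𝔓 : ∀ P ∈ 𝔓, P.IsPrime ∧ monomialIdeal R S ≤ P ∧ X i ∉ P) :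
    monomialIdeal R S ≤ monomialIdeal R {d | d i = 0 ∧ ∀ P ∈ 𝔓, monomial d 1 ∈ P} := by
  refine Ideal.span_le.2 ?_
  rintro _ ⟨e, he, rfl⟩
  change monomial e (1 : R) ∈ _
  rw [← X_pow_mul_monomial_erase i]
  refine Ideal.mul_mem_left _ _
    (Ideal.subset_span ⟨_, ⟨Finsupp.erase_same, fun P hP => ?_⟩, rfl⟩)
  obtain ⟨hP, hSP, hiP⟩ := h𝔓 P hP
  have he : X i ^ e i * monomial (e.erase i) 1 ∈ P := by
    rw [X_pow_mul_monomial_erase]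
    exact hSP (Ideal.subset_span ⟨e, he, rfl⟩)
  exact (hP.mem_or_mem he).resolve_left fun h => hiP (hP.mem_of_pow_mem _ h)

theorem varIdeal_eq_sup {V : Set σ} {i : σ} (hi : i ∈ V) :
    varIdeal R V = varIdeal R (V \ {i}) ⊔ Ideal.span {X i} := by
  rw [sup_comm, ← Ideal.span_insert, ← Set.image_insert_eq, Set.insert_sdiff_singleton,
    Set.insert_eq_of_mem hi]

end CommSemiring

section CommRing

variable [CommRing R]

theorem aeval_sub_mem (J : Ideal (MvPolynomial σ R)) {g : σ → MvPolynomial σ R}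
    (hg : ∀ j, g j - X j ∈ J) (f : MvPolynomial σ R) : aeval g f - f ∈ J := by
  rw [← Ideal.Quotient.eq]
  have : (Ideal.Quotient.mkₐ R J).comp (aeval g) = Ideal.Quotient.mkₐ R J :=
    algHom_ext fun j => by simpa [Ideal.Quotient.eq] using hg j
  exact congr($this f)

variable [IsDomain R]

theorem varIdeal_isPrime (V : Set σ) : (varIdeal R V).IsPrime := by
  classical
  let g : σ → MvPolynomial σ R := fun j => if j ∈ V then 0 else X j
  suffices varIdeal R V = RingHom.ker (aeval g) from this ▸ RingHom.ker_isPrime _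
  refine le_antisymm (Ideal.span_le.2 ?_) fun f hf => ?_
  · rintro _ ⟨j, hj, rfl⟩
    simp [g, hj]
  · have hg : ∀ j, g j - X j ∈ varIdeal R V := fun j => by
      by_cases hj : j ∈ V
      · simpa [g, hj] using
          neg_mem (Ideal.subset_span ⟨j, hj, rfl⟩ : X j ∈ varIdeal R V)
      · simp [g, hj]
    have := aeval_sub_mem _ hg f
    rwa [RingHom.mem_ker.1 hf, zero_sub, neg_mem_iff] at this

theorem eq_varIdeal_of_mem_minimalPrimes {S : Set (σ →₀ ℕ)} {P : Ideal (MvPolynomial σ R)}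
    (hP : P ∈ (monomialIdeal R S).minimalPrimes) : P = varIdeal R {j | X j ∈ P} := by
  classical
  have hle : varIdeal R {j | X j ∈ P} ≤ P :=
    Ideal.span_le.2 (by rintro _ ⟨j, hj, rfl⟩; exact hj)
  refine (hP.2 ⟨varIdeal_isPrime _, Ideal.span_le.2 ?_⟩ hle).antisymm hle
  rintro _ ⟨e, he, rfl⟩
  have := hP.1.1
  have hmem : monomial e 1 ∈ P := hP.1.2 (Ideal.subset_span ⟨e, he, rfl⟩)
  rw [← prod_X_pow_eq_monomial, Ideal.IsPrime.prod_mem_iff] at hmem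
  obtain ⟨j, hj, hjP⟩ := hmem
  rw [SetLike.mem_coe, mem_ideal_span_X_image]
  simpa [support_monomial] using
    ⟨j, hP.1.1.mem_of_pow_mem _ hjP, Finsupp.mem_support_iff.1 hj⟩

theorem exists_monomial_notMem_forall_mem [Finite σ] (S : Set (σ →₀ ℕ))
    {p : Ideal (MvPolynomial σ R)} (hp : p.IsPrime) :
    ∃ c : σ →₀ ℕ, monomial c 1 ∉ p ∧
      ∀ P ∈ (monomialIdeal R S).minimalPrimes, ¬ P ≤ p → monomial c 1 ∈ P := by
  classical
  have := Fintype.ofFinite σ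
  let A := Finset.univ.filter fun j => X j ∉ p
  have hA : monomial (∑ j ∈ A, Finsupp.single j 1) (1 : R) = ∏ j ∈ A, X j :=
    monomial_sum_one _ _
  refine ⟨∑ j ∈ A, Finsupp.single j 1, ?_, fun P hP hPp => ?_⟩ <;> rw [hA]
  · rw [Ideal.IsPrime.prod_mem_iff]
    simp [A]
  · obtain ⟨j, hjP, hjp⟩ : ∃ j, X j ∈ P ∧ X j ∉ p := by
      by_contra! h
      exact hPp ((eq_varIdeal_of_mem_minimalPrimes hP).trans_le
        (Ideal.span_le.2 (by rintro _ ⟨j, hj, rfl⟩; exact h j hj)))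
    exact P.mem_of_dvd (Finset.dvd_prod_of_mem _ (by simpa [A] using hjp)) hjP

theorem X_notMem_of_eq_colon_pow [Finite σ] {S : Set (σ →₀ ℕ)} (hS : ∀ d ∈ S, ∀ j, d j ≤ 1)
    {s : ℕ} {p : Ideal (MvPolynomial σ R)} (hp : p.IsPrime) {f : MvPolynomial σ R}
    (hpf : p = (monomialIdeal R S ^ s).colon {f}) {i : σ}
    (hmin : ∀ P ∈ (monomialIdeal R S).minimalPrimes, P ≤ p → X i ∉ P) : X i ∉ p := by
  intro hi
  obtain ⟨c, hcp, hcP⟩ := exists_monomial_notMem_forall_mem S hp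
  set 𝔓 := {P | P ∈ (monomialIdeal R S).minimalPrimes ∧ P ≤ p}
  set J := monomialIdeal R {d | d i = 0 ∧ ∀ P ∈ 𝔓, monomial d 1 ∈ P}
  have hIJ : monomialIdeal R S ≤ J :=
    monomialIdeal_le_of_X_notMem fun P hP => ⟨hP.1.1.1, hP.1.1.2, hmin P hP.1 hP.2⟩
  have hJc : J * Ideal.span {monomial c 1} ≤ monomialIdeal R S := by
    rw [Ideal.span_mul_span', Ideal.span_le]
    rintro _ ⟨_, ⟨d, hd, rfl⟩, _, rfl, rfl⟩
    change monomial d 1 * monomial c 1 ∈ _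
    have hrad : monomial d 1 * monomial c 1 ∈ (monomialIdeal R S).radical := by
      rw [← Ideal.sInf_minimalPrimes, Ideal.mem_sInf]
      intro P hP
      by_cases hPp : P ≤ p
      · exact Ideal.mul_mem_right _ _ (hd.2 P ⟨hP, hPp⟩)
      · exact Ideal.mul_mem_left _ _ (hcP P hP hPp)
    rw [monomial_mul, one_mul] at hrad ⊢
    exact monomial_mem_of_mem_radical hS hrad
  have hf : f ∈ J ^ s := by
    rw [hpf, Submodule.mem_colon_singleton, smul_eq_mul] at hi
    exact mem_of_X_mul_mem_monomialIdeal_pow (fun d hd => hd.1) (Ideal.pow_right_mono hIJ s hi)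
  refine hcp (hp.mem_of_pow_mem s ?_)
  rw [hpf, Submodule.mem_colon_singleton, smul_eq_mul, mul_comm]
  refine Ideal.pow_right_mono hJc s (mul_pow J (Ideal.span {monomial c 1}) s ▸ ?_)
  exact Ideal.mul_mem_mul hf (Ideal.pow_mem_pow (Ideal.mem_span_singleton_self _) s)

end CommRing

end MvPolynomial

theorem delMap_sub_mem_span_X {n : ℕ} {K : Type*} [Field K] (i : Fin n)
    (f : MvPolynomial (Fin n) K) : delMap K i f - f ∈ Ideal.span {X i} :=
  aeval_sub_mem _ (fun j => by by_cases hj : j = i <;> simp [hj]) f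

theorem eq_map_delMap_sup_of_X_mem {n : ℕ} {K : Type*} [Field K] {i : Fin n}
    {p : Ideal (MvPolynomial (Fin n) K)} (hi : X i ∈ p) :
    p = p.map (delMap K i) ⊔ Ideal.span {X i} := by
  have hXp : Ideal.span {X i} ≤ p := Ideal.span_singleton_le_iff_mem _ |>.2 hi
  have hdel : p ≤ p.comap (delMap K i) := fun f hf => by
    simpa using p.add_mem (hXp (delMap_sub_mem_span_X i f)) hf
  refine le_antisymm (fun f hf => ?_) (sup_le (Ideal.map_le_iff_le_comap.2 hdel) hXp)
  simpa using Submodule.add_mem_sup (Ideal.mem_map_of_mem (delMap K i) hf)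
    (neg_mem (delMap_sub_mem_span_X i f))

theorem map_delMap_varIdeal {n : ℕ} {K : Type*} [Field K] (i : Fin n) (V : Set (Fin n)) :
    (varIdeal K V).map (delMap K i) = varIdeal K (V \ {i}) := by
  rw [varIdeal, Ideal.map_span, Set.image_image]
  refine le_antisymm (Ideal.span_le.2 ?_) (Ideal.span_le.2 ?_)
  · rintro _ ⟨j, hj, rfl⟩
    by_cases hji : j = i
    · simp [delMap, hji]
    · simpa [delMap, hji] using
        (Ideal.subset_span ⟨j, ⟨hj, hji⟩, rfl⟩ : X j ∈ varIdeal K (V \ {i}))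
  · rintro _ ⟨j, ⟨hj, hji : j ≠ i⟩, rfl⟩
    exact Ideal.subset_span ⟨j, hj, by simp [delMap, hji]⟩

theorem eq_varIdeal_of_map_delMap_mem_minimalPrimes {n : ℕ} {K : Type*} [Field K] {i : Fin n}
    {I p : Ideal (MvPolynomial (Fin n) K)} {V : Set (Fin n)} (hIV : I ≤ varIdeal K V)
    (hVp : varIdeal K V ≤ p) (hiV : i ∈ V)
    (hq : p.map (delMap K i) ∈ (I.map (delMap K i)).minimalPrimes) :
    p = varIdeal K V := by
  have hle : (varIdeal K V).map (delMap K i) ≤ p.map (delMap K i) := Ideal.map_mono hVp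
  have hprime : ((varIdeal K V).map (delMap K i)).IsPrime := by
    rw [map_delMap_varIdeal]
    exact varIdeal_isPrime _
  have heq : p.map (delMap K i) = (varIdeal K V).map (delMap K i) :=
    (hq.2 ⟨hprime, Ideal.map_mono hIV⟩ hle).antisymm hle
  rw [eq_map_delMap_sup_of_X_mem (hVp (Ideal.subset_span ⟨i, hiV, rfl⟩)), heq,
    map_delMap_varIdeal, ← varIdeal_eq_sup hiV]

theorem stmt15_general {n : ℕ} {K : Type*} [Field K]
    (I : Ideal (MvPolynomial (Fin n) K)) (hI : IsSqFreeMonomialIdeal I)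
    (s : ℕ)
    (p : Ideal (MvPolynomial (Fin n) K))
    (hAss : p ∈ associatedPrimes (MvPolynomial (Fin n) K)
      (MvPolynomial (Fin n) K ⧸ (I ^ s)))
    (hpmin : p ∉ I.minimalPrimes)
    (i : Fin n) (hi : (X i : MvPolynomial (Fin n) K) ∈ p) :
    Ideal.map (delMap K i) p ∉ (Ideal.map (delMap K i) I).minimalPrimes := by
  obtain ⟨S, hS, rfl⟩ := hI
  obtain ⟨hp, x, hx⟩ := isAssociatedPrime_iff.1 hAss
  obtain ⟨f, rfl⟩ := Ideal.Quotient.mk_surjective x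
  intro hq
  refine X_notMem_of_eq_colon_pow hS hp (hx.trans (Ideal.colon_bot_singleton_mk _ f))
    (fun P hP hPp hiP => hpmin ?_) hi
  have hPV := eq_varIdeal_of_mem_minimalPrimes hP
  rwa [eq_varIdeal_of_map_delMap_mem_minimalPrimes (hPV ▸ hP.1.2) (hPV ▸ hPp) hiP hq, ← hPV]

/-- If `𝔭 ∈ Ass(R/I^s) \ Min(I)` for some `s > 1` and `x_i ∈ 𝔭`, then
`𝔭 \ x_i ∉ Min(I \ x_i)`, where `\ x_i` is the deletion obtained by setting `x_i = 0`. -/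
theorem stmt15 {n : ℕ} {K : Type*} [Field K]
    (I : Ideal (MvPolynomial (Fin n) K)) (hI : IsSqFreeMonomialIdeal I)
    (s : ℕ) (hs : 1 < s)
    (p : Ideal (MvPolynomial (Fin n) K))
    (hAss : p ∈ associatedPrimes (MvPolynomial (Fin n) K)
      (MvPolynomial (Fin n) K ⧸ (I ^ s)))
    (hpmin : p ∉ I.minimalPrimes)
    (i : Fin n) (hi : (X i : MvPolynomial (Fin n) K) ∈ p) :
    Ideal.map (delMap K i) p ∉ (Ideal.map (delMap K i) I).minimalPrimes :=
  stmt15_general I hI s p hAss hpmin i hi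
end
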